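/- arXiv:1810.13256 — 2 statements merged into one kernel-verified Lean document; each statement's English description precedes it below -/
import Mathlib

section
/- Fix α with 3/2 ≤ α ≤ 2, a constant ε with 0 < ε, a constant γ ∈ (0, 1/(4√2)], and channel coefficients h₁₁, h₁₂, h₂₁, h₂₂ ∈ (1, 2]. For P > 1 let Q = P^{(2−α−ε)/2}, and let v₁c, v₂c, u₁, u₂ be independent random variables each uniformly distributed on Ω(2γ/Q, Q), mutually independent and independent of z₁ distributed as the Gaussian measure N(0, 1). Define y₁ = √(P^{2−α})·h₁₁h₂₂·v₁c + √P·h₁₂h₁₁·(v₂c + u₁) + √(P^{α})·h₁₂h₂₁·u₂ + z₁. Then for every η > 0 there exists P₀ such that for all P ≥ P₀ there is a Borel-measurable function f : ℝ → ℝ with ℙ[ f(y₁) = v₁c ] > 1 − η. (Successive decoding recovers v₁c from y₁ with error probability tending to 0 as P → ∞.) -/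
/-!
The noiseless output is `ξ (w₁ g₁ a + w₂ g₂ b + w₃ g₃ c)` with integers `|a|, |c| ≤ Q`, `|b| ≤ 2Q`
(`b` indexes `v₂c + u₁`) and weights `w₁ = P^((2-α)/2)`, `w₂ = P^(1/2)`, `w₃ = P^(α/2)`. For
`α ≥ 3/2` each weight exceeds `Q` times the smaller ones by a factor of order `P^(ε/2)`, so the
highest-weight stream in which two constellation points differ cannot be cancelled: points with
different `a` are at distance at least `ξ w₁ = 2γ P^(ε/2)`. Reading off `a` from the
`γ P^(ε/2)`-neighbourhoods of these clouds is thus correct whenever `|z₁| < γ P^(ε/2)`, and the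
Gaussian probability of that event tends to `1`.
-/

open MeasureTheory ProbabilityTheory Real Filter Topology Set

def PAM (ξ Q : ℝ) : Set ℝ :=
  {x | ∃ a : ℤ, x = ξ * a ∧ -Q ≤ (a : ℝ) ∧ (a : ℝ) ≤ Q}

lemma mem_Icc_ceil_neg_floor {a : ℤ} {Q : ℝ} : a ∈ Finset.Icc ⌈-Q⌉ ⌊Q⌋ ↔ |(a : ℝ)| ≤ Q := by
  rw [Finset.mem_Icc, Int.ceil_le, Int.le_floor, abs_le]

lemma abs_intCast_sub_le {a a' : ℤ} {B B' : ℝ} (ha : |(a : ℝ)| ≤ B) (ha' : |(a' : ℝ)| ≤ B') :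
    |((a - a' : ℤ) : ℝ)| ≤ B + B' := by
  push_cast
  exact (abs_sub _ _).trans (add_le_add ha ha')

lemma PAM_finite (ξ Q : ℝ) : (PAM ξ Q).Finite := by
  refine ((Set.finite_Icc ⌈-Q⌉ ⌊Q⌋).image fun a : ℤ => ξ * a).subset ?_
  rintro _ ⟨a, rfl, ha₁, ha₂⟩
  exact ⟨a, ⟨Int.ceil_le.2 ha₁, Int.le_floor.2 ha₂⟩, rfl⟩

lemma ae_mem_of_map_eq_uniformOn {Ω : Type*} [MeasurableSpace Ω] {μ : Measure Ω} {X : Ω → ℝ}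
    {S : Set ℝ} (hS : S.Finite) (hX : Measurable X) (hmap : μ.map X = uniformOn S) :
    ∀ᵐ ω ∂μ, X ω ∈ S :=
  ae_of_ae_map hX.aemeasurable <|
    hmap ▸ ae_iff.2 ((uniformOn_eq_zero_iff hS).2 (inter_compl_self S))

lemma tendsto_measure_Ioo_neg_self_atTop (μ : Measure ℝ) :
    Tendsto (fun r => μ (Ioo (-r) r)) atTop (𝓝 (μ univ)) := by
  have hmono : Monotone fun r : ℝ => Ioo (-r) r := fun r s h =>
    Ioo_subset_Ioo (neg_le_neg h) h
  have hcover : (⋃ r : ℝ, Ioo (-r) r) = univ :=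
    eq_univ_of_forall fun x => mem_iUnion.2 ⟨|x| + 1, by
      constructor <;> linarith [neg_abs_le x, le_abs_self x]⟩
  simpa only [hcover, Function.comp_def] using tendsto_measure_iUnion_atTop (μ := μ) hmono

lemma exists_measurable_decoder {X ι κ : Type*} [PseudoMetricSpace X] [MeasurableSpace X]
    [OpensMeasurableSpace X] [Countable κ] (A : Finset ι) (K : Set κ) (pt : ι → κ → X)
    (lab : ι → ℝ) {r : ℝ}
    (hsep : ∀ a ∈ A, ∀ a' ∈ A, a ≠ a' → ∀ k ∈ K, ∀ k' ∈ K, 2 * r ≤ dist (pt a k) (pt a' k')) :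
    ∃ f : X → ℝ, Measurable f ∧
      ∀ a ∈ A, ∀ k ∈ K, ∀ x, dist x (pt a k) < r → f x = lab a := by
  let U : ι → Set X := fun a => ⋃ k ∈ K, Metric.ball (pt a k) r
  have hU : ∀ a, MeasurableSet (U a) := fun a =>
    MeasurableSet.biUnion K.to_countable fun _ _ => measurableSet_ball
  refine ⟨fun x => ∑ a ∈ A, (U a).indicator (fun _ => lab a) x,
    Finset.measurable_sum A fun a _ => measurable_const.indicator (hU a), ?_⟩
  intro a ha k hk x hx
  have hnot : ∀ a' ∈ A, a' ≠ a → x ∉ U a' := by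
    intro a' ha' hne hxU
    obtain ⟨k', hk', hxk'⟩ := mem_iUnion₂.1 hxU
    have := hsep a' ha' a ha hne k' hk' k hk
    linarith [dist_triangle_left (pt a' k') (pt a k) x, Metric.mem_ball.1 hxk']
  dsimp only
  rw [Finset.sum_eq_single_of_mem a ha fun a' ha' hne => indicator_of_notMem (hnot a' ha' hne) _]
  exact indicator_of_mem (mem_iUnion₂.2 ⟨k, hk, hx⟩) _

lemma le_abs_mul_mul_intCast {w g : ℝ} {v : ℤ} (hw : 0 ≤ w) (hg : 1 ≤ g) (hv : v ≠ 0) :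
    w ≤ |w * g * v| := by
  have hv1 : (1 : ℝ) ≤ |(v : ℝ)| := by exact_mod_cast Int.one_le_abs hv
  rw [abs_mul, abs_mul, abs_of_nonneg hw, abs_of_nonneg (by linarith)]
  nlinarith [mul_le_mul hg hv1 zero_le_one (by linarith)]

lemma abs_mul_mul_le {w g v B : ℝ} (hw : 0 ≤ w) (hg : g ∈ Icc (1 : ℝ) 4) (hv : |v| ≤ B) :
    |w * g * v| ≤ 4 * w * B := by
  rw [abs_mul, abs_mul, abs_of_nonneg hw, abs_of_nonneg (by linarith [hg.1])]
  have := mul_le_mul hg.2 hv (abs_nonneg v) (by norm_num)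
  nlinarith

lemma le_abs_superposition {w₁ w₂ w₃ Q g₁ g₂ g₃ : ℝ} (hw₁ : 0 ≤ w₁) (hw₂ : 0 ≤ w₂) (hw₃ : 0 ≤ w₃)
    (hg₁ : g₁ ∈ Icc (1 : ℝ) 4) (hg₂ : g₂ ∈ Icc (1 : ℝ) 4) (hg₃ : g₃ ∈ Icc (1 : ℝ) 4)
    (h₁₂ : w₁ + 8 * w₁ * Q ≤ w₂) (h₁₂₃ : w₁ + 8 * w₁ * Q + 16 * w₂ * Q ≤ w₃)
    {a b c : ℤ} (ha : a ≠ 0) (haQ : |(a : ℝ)| ≤ 2 * Q) (hbQ : |(b : ℝ)| ≤ 4 * Q)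
    (hcQ : |(c : ℝ)| ≤ 2 * Q) :
    w₁ ≤ |w₁ * g₁ * a + w₂ * g₂ * b + w₃ * g₃ * c| := by
  have hx := abs_mul_mul_le hw₁ hg₁ haQ
  rcases eq_or_ne c 0 with rfl | hc
  · rcases eq_or_ne b 0 with rfl | hb
    · simpa using le_abs_mul_mul_intCast hw₁ hg₁.1 ha
    · have hy := le_abs_mul_mul_intCast hw₂ hg₂.1 hb
      have := abs_sub_abs_le_abs_add (w₂ * g₂ * b) (w₁ * g₁ * a)
      rw [add_comm] at this
      simp only [Int.cast_zero, mul_zero, add_zero]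
      linarith
  · have hy := abs_mul_mul_le hw₂ hg₂ hbQ
    have hz := le_abs_mul_mul_intCast hw₃ hg₃.1 hc
    have := abs_add_three (w₁ * g₁ * a + w₂ * g₂ * b + w₃ * g₃ * c) (-(w₁ * g₁ * a))
      (-(w₂ * g₂ * b))
    rw [abs_neg, abs_neg, show w₁ * g₁ * a + w₂ * g₂ * b + w₃ * g₃ * c + -(w₁ * g₁ * a)
      + -(w₂ * g₂ * b) = w₃ * g₃ * c by ring] at this
    linarith

lemma mul_mem_Icc_one_four {h h' : ℝ} (hh : h ∈ Ioc (1 : ℝ) 2) (hh' : h' ∈ Ioc (1 : ℝ) 2) :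
    h * h' ∈ Icc (1 : ℝ) 4 :=
  ⟨by nlinarith [hh.1, hh'.1], by nlinarith [hh.1, hh.2, hh'.1, hh'.2]⟩

lemma sqrt_rpow_eq_rpow_half {P : ℝ} (hP : 0 ≤ P) (x : ℝ) : √(P ^ x) = P ^ (x / 2) := by
  rw [sqrt_eq_rpow, ← rpow_mul hP]
  ring_nf

lemma mul_rpow_le_rpow_of_le_rpow {P c δ x y : ℝ} (hP : 1 ≤ P) (hc : c ≤ P ^ δ)
    (hxy : x + δ ≤ y) : c * P ^ x ≤ P ^ y :=
  calc c * P ^ x ≤ P ^ δ * P ^ x := by gcongr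
    _ = P ^ (x + δ) := by rw [rpow_add (by linarith), mul_comm]
    _ ≤ P ^ y := rpow_le_rpow_of_exponent_le hP hxy

lemma rpow_weights_dominant {α ε P : ℝ} (hα : 3 / 2 ≤ α) (hP : 1 ≤ P)
    (hP2 : 2 ≤ P ^ (1 / 4 : ℝ)) (hP48 : 48 ≤ P ^ (ε / 2)) :
    P ^ ((2 - α) / 2) + 8 * P ^ ((2 - α) / 2) * P ^ ((2 - α - ε) / 2) ≤ P ^ (1 / 2 : ℝ) ∧
      P ^ ((2 - α) / 2) + 8 * P ^ ((2 - α) / 2) * P ^ ((2 - α - ε) / 2)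
        + 16 * P ^ (1 / 2 : ℝ) * P ^ ((2 - α - ε) / 2) ≤ P ^ (α / 2) := by
  simp only [mul_assoc, ← rpow_add (zero_lt_one.trans_le hP)]
  have h₁ := mul_rpow_le_rpow_of_le_rpow hP hP2 (x := (2 - α) / 2) (y := 1 / 2) (by linarith)
  have h₂ := mul_rpow_le_rpow_of_le_rpow hP hP48 (x := (2 - α) / 2 + (2 - α - ε) / 2)
    (y := 1 / 2) (by linarith)
  have h₃ := mul_rpow_le_rpow_of_le_rpow hP hP2 (x := (2 - α) / 2) (y := α / 2) (by linarith)
  have h₄ := mul_rpow_le_rpow_of_le_rpow hP hP48 (x := (2 - α) / 2 + (2 - α - ε) / 2)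
    (y := α / 2) (by linarith)
  have h₅ := mul_rpow_le_rpow_of_le_rpow hP hP48 (x := 1 / 2 + (2 - α - ε) / 2)
    (y := α / 2) (by linarith)
  have : 0 ≤ P ^ (1 / 2 : ℝ) := by positivity
  constructor <;> linarith

theorem exists_measurable_successive_decoder {α ε γ P g₁ g₂ g₃ : ℝ} (hα : 3 / 2 ≤ α) (hγ : 0 < γ)
    (hP : 1 ≤ P) (hP2 : 2 ≤ P ^ (1 / 4 : ℝ)) (hP48 : 48 ≤ P ^ (ε / 2))
    (hg₁ : g₁ ∈ Icc (1 : ℝ) 4) (hg₂ : g₂ ∈ Icc (1 : ℝ) 4) (hg₃ : g₃ ∈ Icc (1 : ℝ) 4) :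
    ∃ f : ℝ → ℝ, Measurable f ∧
      ∀ v₁ ∈ PAM (2 * γ / P ^ ((2 - α - ε) / 2)) (P ^ ((2 - α - ε) / 2)),
      ∀ v₂ ∈ PAM (2 * γ / P ^ ((2 - α - ε) / 2)) (P ^ ((2 - α - ε) / 2)),
      ∀ u₁ ∈ PAM (2 * γ / P ^ ((2 - α - ε) / 2)) (P ^ ((2 - α - ε) / 2)),
      ∀ u₂ ∈ PAM (2 * γ / P ^ ((2 - α - ε) / 2)) (P ^ ((2 - α - ε) / 2)),
      ∀ z, |z| < γ * P ^ (ε / 2) →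
        f (√(P ^ (2 - α)) * g₁ * v₁ + √P * g₂ * (v₂ + u₁) + √(P ^ α) * g₃ * u₂ + z) = v₁ := by
  have hP0 : 0 < P := zero_lt_one.trans_le hP
  obtain ⟨hw₂, hw₃⟩ := rpow_weights_dominant hα hP hP2 hP48
  simp only [← sqrt_eq_rpow, ← sqrt_rpow_eq_rpow_half hP0.le (2 - α),
    ← sqrt_rpow_eq_rpow_half hP0.le α] at hw₂ hw₃
  set Q := P ^ ((2 - α - ε) / 2) with hQ
  set ξ := 2 * γ / Q
  have hξ : 0 < ξ := by positivity
  have hξw : ξ * √(P ^ (2 - α)) = 2 * (γ * P ^ (ε / 2)) := by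
    rw [sqrt_rpow_eq_rpow_half hP0.le, div_mul_eq_mul_div, mul_div_assoc, hQ, ← rpow_sub hP0]
    ring_nf
  let pt : ℤ → ℤ × ℤ → ℝ := fun a k =>
    √(P ^ (2 - α)) * g₁ * (ξ * a) + √P * g₂ * (ξ * k.1) + √(P ^ α) * g₃ * (ξ * k.2)
  let K : Set (ℤ × ℤ) := {k | |(k.1 : ℝ)| ≤ 2 * Q ∧ |(k.2 : ℝ)| ≤ Q}
  have hsep : ∀ a ∈ Finset.Icc ⌈-Q⌉ ⌊Q⌋, ∀ a' ∈ Finset.Icc ⌈-Q⌉ ⌊Q⌋, a ≠ a' →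
      ∀ k ∈ K, ∀ k' ∈ K, 2 * (γ * P ^ (ε / 2)) ≤ dist (pt a k) (pt a' k') := by
    rintro a ha a' ha' hne ⟨b, c⟩ ⟨hb, hc⟩ ⟨b', c'⟩ ⟨hb', hc'⟩
    rw [mem_Icc_ceil_neg_floor] at ha ha'
    have hdiff : pt a (b, c) - pt a' (b', c') = ξ * (√(P ^ (2 - α)) * g₁ * ((a - a' : ℤ) : ℝ)
        + √P * g₂ * ((b - b' : ℤ) : ℝ) + √(P ^ α) * g₃ * ((c - c' : ℤ) : ℝ)) := by
      push_cast; ring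
    rw [Real.dist_eq, hdiff, abs_mul, abs_of_pos hξ, ← hξw]
    refine mul_le_mul_of_nonneg_left (le_abs_superposition (by positivity) (by positivity)
      (by positivity) hg₁ hg₂ hg₃ hw₂ hw₃ (sub_ne_zero.2 hne) ?_ ?_ ?_) hξ.le
    · linarith [abs_intCast_sub_le ha ha']
    · linarith [abs_intCast_sub_le hb hb']
    · linarith [abs_intCast_sub_le hc hc']
  obtain ⟨f, hf, hdec⟩ := exists_measurable_decoder _ K pt (fun a => ξ * a) hsep
  refine ⟨f, hf, ?_⟩
  rintro _ ⟨a, rfl, ha⟩ _ ⟨b, rfl, hb⟩ _ ⟨b', rfl, hb'⟩ _ ⟨c, rfl, hc⟩ z hz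
  refine hdec a (mem_Icc_ceil_neg_floor.2 (abs_le.2 ha)) (b + b', c)
    ⟨?_, abs_le.2 hc⟩ _ ?_
  · push_cast
    exact (abs_add_le _ _).trans (by linarith [abs_le.2 hb, abs_le.2 hb'])
  · rw [Real.dist_eq]
    convert hz using 2
    dsimp only [pt]
    push_cast
    ring

theorem successive_decoding_regime_three_halves_two_general
    (α ε γ h₁₁ h₁₂ h₂₁ h₂₂ : ℝ)
    (hα₁ : 3 / 2 ≤ α) (hε : 0 < ε)
    (hγ₁ : 0 < γ)
    (hh₁₁ : h₁₁ ∈ Set.Ioc (1 : ℝ) 2) (hh₁₂ : h₁₂ ∈ Set.Ioc (1 : ℝ) 2)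
    (hh₂₁ : h₂₁ ∈ Set.Ioc (1 : ℝ) 2) (hh₂₂ : h₂₂ ∈ Set.Ioc (1 : ℝ) 2) :
    ∀ η > (0 : ℝ), ∃ P₀ > (1 : ℝ), ∀ P ≥ P₀,
      ∀ (Ω : Type) (_ : MeasurableSpace Ω) (μ : Measure Ω) (_ : IsProbabilityMeasure μ)
        (v₁c v₂c u₁ u₂ z₁ : Ω → ℝ),
        Measurable v₁c → Measurable v₂c → Measurable u₁ → Measurable u₂ → Measurable z₁ →
        Measure.map v₁c μ
          = uniformOn (PAM (2 * γ / P ^ ((2 - α - ε) / 2)) (P ^ ((2 - α - ε) / 2))) →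
        Measure.map v₂c μ
          = uniformOn (PAM (2 * γ / P ^ ((2 - α - ε) / 2)) (P ^ ((2 - α - ε) / 2))) →
        Measure.map u₁ μ
          = uniformOn (PAM (2 * γ / P ^ ((2 - α - ε) / 2)) (P ^ ((2 - α - ε) / 2))) →
        Measure.map u₂ μ
          = uniformOn (PAM (2 * γ / P ^ ((2 - α - ε) / 2)) (P ^ ((2 - α - ε) / 2))) →
        Measure.map z₁ μ = gaussianReal 0 1 →
        iIndepFun (m := fun _ : Fin 5 => (inferInstance : MeasurableSpace ℝ))
          ![v₁c, v₂c, u₁, u₂, z₁] μ →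
        ∃ f : ℝ → ℝ, Measurable f ∧
          μ {ω | f (Real.sqrt (P ^ (2 - α)) * (h₁₁ * h₂₂) * v₁c ω
                    + Real.sqrt P * (h₁₂ * h₁₁) * (v₂c ω + u₁ ω)
                    + Real.sqrt (P ^ α) * (h₁₂ * h₂₁) * u₂ ω + z₁ ω)
                  = v₁c ω}
            > ENNReal.ofReal (1 - η) := by
  intro η hη
  have hnoise : ∀ᶠ P in atTop,
      ENNReal.ofReal (1 - η) < gaussianReal 0 1 (Ioo (-(γ * P ^ (ε / 2))) (γ * P ^ (ε / 2))) := by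
    refine ((tendsto_measure_Ioo_neg_self_atTop _).comp
      ((tendsto_rpow_atTop (half_pos hε)).const_mul_atTop hγ₁)).eventually
      (eventually_gt_nhds ?_)
    rw [measure_univ]
    exact ENNReal.ofReal_lt_one.2 (by linarith)
  obtain ⟨P₀, hP₀⟩ := eventually_atTop.1 ((eventually_ge_atTop 1).and
    (((tendsto_rpow_atTop (by norm_num : (0 : ℝ) < 1 / 4)).eventually_ge_atTop 2).and
    (((tendsto_rpow_atTop (half_pos hε)).eventually_ge_atTop 48).and hnoise)))
  refine ⟨max P₀ 2, by simp, fun P hP Ω _ μ _ v₁c v₂c u₁ u₂ z₁ hmv₁ hmv₂ hmu₁ hmu₂ hmz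
    hv₁ hv₂ hu₁ hu₂ hz _ => ?_⟩
  obtain ⟨hP1, hP2, hP48, hPnoise⟩ := hP₀ P (le_of_max_le_left hP)
  obtain ⟨f, hf, hdec⟩ := exists_measurable_successive_decoder hα₁ hγ₁ hP1 hP2 hP48
    (mul_mem_Icc_one_four hh₁₁ hh₂₂) (mul_mem_Icc_one_four hh₁₂ hh₁₁)
    (mul_mem_Icc_one_four hh₁₂ hh₂₁)
  refine ⟨f, hf, hPnoise.trans_le ?_⟩
  rw [← hz, Measure.map_apply hmz measurableSet_Ioo]
  have hfin := PAM_finite (2 * γ / P ^ ((2 - α - ε) / 2)) (P ^ ((2 - α - ε) / 2))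
  refine measure_mono_ae ?_
  filter_upwards [ae_mem_of_map_eq_uniformOn hfin hmv₁ hv₁,
    ae_mem_of_map_eq_uniformOn hfin hmv₂ hv₂, ae_mem_of_map_eq_uniformOn hfin hmu₁ hu₁,
    ae_mem_of_map_eq_uniformOn hfin hmu₂ hu₂]
    with ω h₁ h₂ h₃ h₄ hzω
  exact hdec _ h₁ _ h₂ _ h₃ _ h₄ _ (abs_lt.2 hzω)

/-- In the regime `3/2 ≤ α ≤ 2`, successive decoding recovers `v₁c` from the
channel output `y₁` with error probability tending to `0` as `P → ∞`. -/
theorem successive_decoding_regime_three_halves_two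
    (α ε γ h₁₁ h₁₂ h₂₁ h₂₂ : ℝ)
    (hα₁ : 3 / 2 ≤ α) (hα₂ : α ≤ 2) (hε : 0 < ε)
    (hγ₁ : 0 < γ) (hγ₂ : γ ≤ 1 / (4 * Real.sqrt 2))
    (hh₁₁ : h₁₁ ∈ Set.Ioc (1 : ℝ) 2) (hh₁₂ : h₁₂ ∈ Set.Ioc (1 : ℝ) 2)
    (hh₂₁ : h₂₁ ∈ Set.Ioc (1 : ℝ) 2) (hh₂₂ : h₂₂ ∈ Set.Ioc (1 : ℝ) 2) :
    ∀ η > (0 : ℝ), ∃ P₀ > (1 : ℝ), ∀ P ≥ P₀,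
      ∀ (Ω : Type) (_ : MeasurableSpace Ω) (μ : Measure Ω) (_ : IsProbabilityMeasure μ)
        (v₁c v₂c u₁ u₂ z₁ : Ω → ℝ),
        Measurable v₁c → Measurable v₂c → Measurable u₁ → Measurable u₂ → Measurable z₁ →
        Measure.map v₁c μ
          = uniformOn (PAM (2 * γ / P ^ ((2 - α - ε) / 2)) (P ^ ((2 - α - ε) / 2))) →
        Measure.map v₂c μ
          = uniformOn (PAM (2 * γ / P ^ ((2 - α - ε) / 2)) (P ^ ((2 - α - ε) / 2))) →
        Measure.map u₁ μ
          = uniformOn (PAM (2 * γ / P ^ ((2 - α - ε) / 2)) (P ^ ((2 - α - ε) / 2))) →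
        Measure.map u₂ μ
          = uniformOn (PAM (2 * γ / P ^ ((2 - α - ε) / 2)) (P ^ ((2 - α - ε) / 2))) →
        Measure.map z₁ μ = gaussianReal 0 1 →
        iIndepFun (m := fun _ : Fin 5 => (inferInstance : MeasurableSpace ℝ))
          ![v₁c, v₂c, u₁, u₂, z₁] μ →
        ∃ f : ℝ → ℝ, Measurable f ∧
          μ {ω | f (Real.sqrt (P ^ (2 - α)) * (h₁₁ * h₂₂) * v₁c ω
                    + Real.sqrt P * (h₁₂ * h₁₁) * (v₂c ω + u₁ ω)
                    + Real.sqrt (P ^ α) * (h₁₂ * h₂₁) * u₂ ω + z₁ ω)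
                  = v₁c ω}
            > ENNReal.ofReal (1 - η) :=
  successive_decoding_regime_three_halves_two_general α ε γ h₁₁ h₁₂ h₂₁ h₂₂ hα₁ hε hγ₁ hh₁₁ hh₁₂
    hh₂₁ hh₂₂
end

section
/- Let α ∈ [1, 3/2], δ ∈ (0, 1], ε > 0, and let P ≥ 1 be a real number such that A₁ := P^{(α−1)/2} and A₂ := P^{α−1} are positive integers. Set Q_max = P^{(α/3−ε)/2} and β̄ = δ·P^{−(2−4α/3)/2}. Define B̄ ⊆ (1,4]³ as the set of triples (ḡ₀, ḡ₁, ḡ₂) ∈ (1,4]³ for which there exist integers q₀, q₁, q₂, not all zero, with |q₀| ≤ 2Q_max, |q₁| ≤ 4Q_max, |q₂| ≤ 2Q_max and |ḡ₀q₀ + A₁ḡ₁q₁ + A₂ḡ₂q₂| < β̄. Then the three-dimensional Lebesgue measure of B̄ is at most 129024·δ·P^{−ε/2}. -/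
/-!
Split the outage set according to the last nonzero coefficient. A lone `q₀` is impossible, since
`|g₀ q₀| > 1 ≥ β̄`. Otherwise fix all coordinates and coefficients except the last nonzero
coefficient `q` and its coordinate `y ∈ (1,4]`, with multiplier `A ∈ {A₁, A₂}`. Then
`|c + A y q| < β̄` puts `A y |q|` in `(|c| - β̄, |c| + β̄)`, an interval of `y`'s of length
`2β̄ / (A |q|)`, and the values of `|q|` compatible with `y ∈ (1,4]` number at most 16 times the
smallest of them. So each slab has measure `O(β̄ / A)`, and summing over the `O(Q_max)` choices of
`q₀`, resp. the `O(Q_max²)` choices of `(q₀, q₁)`, gives `O(δ P^{α/3 - 1/2 - ε/2} + δ P^{-ε})`,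
which is `O(δ P^{-ε/2})` because `α ≤ 3/2`.
-/

open MeasureTheory Real

local notation "𝕀" => Set.Ioc (1 : ℝ) 4

theorem MeasureTheory.Measure.prod_apply_le_mul_of_forall_fiber_le {α β : Type*}
    [MeasurableSpace α] [MeasurableSpace β] {μ : Measure α} {ν : Measure β}
    {S : Set (α × β)} (hS : MeasurableSet S) {s : Set α} (hs : MeasurableSet s)
    (hSs : ∀ p ∈ S, p.1 ∈ s) {m : ENNReal} (hm : ∀ x ∈ s, ν (Prod.mk x ⁻¹' S) ≤ m) :
    μ.prod ν S ≤ m * μ s := by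
  refine (Measure.prod_apply_le hS).trans ?_
  rw [← lintegral_indicator_const hs]
  refine lintegral_mono fun x => ?_
  by_cases hx : x ∈ s
  · simpa [hx] using hm x hx
  · have : Prod.mk x ⁻¹' S = ∅ := Set.eq_empty_of_forall_notMem fun y hy => hx (hSs _ hy)
    simp [this]

def HasSmallNonzeroMultiple (β c a : ℝ) : Prop := ∃ q : ℤ, q ≠ 0 ∧ |c + a * q| < β

theorem measurableSet_hasSmallNonzeroMultiple {X : Type*} [MeasurableSpace X] {c a : X → ℝ}
    (hc : Measurable c) (ha : Measurable a) (β : ℝ) :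
    MeasurableSet {x | HasSmallNonzeroMultiple β (c x) (a x)} := by
  simp only [HasSmallNonzeroMultiple, Set.ofPred_exists]
  refine MeasurableSet.iUnion fun q => ?_
  by_cases hq : q = 0
  · simp [hq]
  · simp only [hq, ne_eq, not_false_eq_true, true_and]
    exact measurableSet_lt (by fun_prop) measurable_const

theorem setOf_hasSmallNonzeroMultiple_subset_biUnion {A β : ℝ} (c : ℝ) (hA : 0 < A) :
    {y ∈ 𝕀 | HasSmallNonzeroMultiple β c (A * y)} ⊆
      ⋃ k ∈ Finset.Icc (⌊(|c| - β) / A / 4⌋₊ + 1) ⌊(|c| + β) / A⌋₊,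
        Set.Ioo ((|c| - β) / A / k) ((|c| + β) / A / k) := by
  rintro y ⟨⟨hy1, hy4⟩, q, hq, hlt⟩
  have hAyq : |A * y * q| = A * y * q.natAbs := by
    rw [abs_mul, abs_of_pos (by positivity), Nat.cast_natAbs, Int.cast_abs]
  have hlo : |c| - β < A * y * q.natAbs := by
    have := abs_sub_abs_le_abs_sub c (-(A * y * q))
    rw [abs_neg, sub_neg_eq_add] at this
    linarith
  have hhi : A * y * q.natAbs < |c| + β := by
    have := abs_sub_abs_le_abs_sub (A * y * q) (-c)
    rw [abs_neg, sub_neg_eq_add, add_comm] at this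
    linarith
  refine Set.mem_biUnion (x := q.natAbs) (Finset.mem_Icc.2 ⟨?_, ?_⟩) ⟨?_, ?_⟩
  · rw [Nat.add_one_le_iff, Nat.floor_lt' (by positivity), div_lt_iff₀ (by norm_num),
      div_lt_iff₀ hA]
    nlinarith [mul_le_mul_of_nonneg_left hy4 (by positivity : (0 : ℝ) ≤ A * q.natAbs)]
  · rw [Nat.le_floor_iff' (by positivity), le_div_iff₀ hA]
    nlinarith [mul_le_mul_of_nonneg_left hy1.le (by positivity : (0 : ℝ) ≤ A * q.natAbs)]
  · rw [div_div, div_lt_iff₀ (by positivity)]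
    linarith
  · rw [div_div, lt_div_iff₀ (by positivity)]
    linarith

theorem natFloor_add_one_le_sixteen_mul_natFloor_add_one {A β : ℝ} (t : ℝ) (hA : 0 < A)
    (hβA : β ≤ A) :
    (⌊(t + β) / A⌋₊ : ℝ) + 1 ≤ 16 * ((⌊(t - β) / A / 4⌋₊ + 1 : ℕ) : ℝ) := by
  have hk₀ : (t - β) / A / 4 < ((⌊(t - β) / A / 4⌋₊ + 1 : ℕ) : ℝ) := by
    push_cast; exact Nat.lt_floor_add_one _
  have hk₀' : (1 : ℝ) ≤ ((⌊(t - β) / A / 4⌋₊ + 1 : ℕ) : ℝ) := by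
    exact_mod_cast Nat.le_add_left 1 _
  rcases le_or_gt ((t + β) / A) 3 with hb | hb
  · have : (⌊(t + β) / A⌋₊ : ℝ) ≤ 3 := by exact_mod_cast Nat.floor_le_of_le hb
    linarith
  · have hK := Nat.floor_le (a := (t + β) / A) (by linarith)
    rw [lt_div_iff₀ hA] at hb
    have : (t + β) / A + 1 ≤ 4 * ((t - β) / A) := by
      rw [div_add_one hA.ne', ← mul_div_assoc, div_le_div_iff_of_pos_right hA]
      linarith
    linarith

theorem volume_setOf_hasSmallNonzeroMultiple_le {A β : ℝ} (c : ℝ) (hβ : 0 < β) (hβA : β ≤ A) :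
    volume {y ∈ 𝕀 | HasSmallNonzeroMultiple β c (A * y)} ≤
      ENNReal.ofReal (32 * β / A) := by
  have hA : 0 < A := hβ.trans_le hβA
  set a := (|c| - β) / A
  set b := (|c| + β) / A
  set k₀ := ⌊a / 4⌋₊ + 1
  have hba : b - a = 2 * β / A := by ring
  have hab : 0 ≤ b - a := by rw [hba]; positivity
  have hk₀ : (0 : ℝ) < k₀ := by positivity
  have hlen : ∀ k ∈ Finset.Icc k₀ ⌊b⌋₊, volume (Set.Ioo (a / k) (b / k)) ≤
      ENNReal.ofReal ((b - a) / k₀) := by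
    intro k hk
    have : (k₀ : ℝ) ≤ k := by exact_mod_cast (Finset.mem_Icc.1 hk).1
    rw [Real.volume_Ioo, div_sub_div_same]
    gcongr
  have hcard : ((Finset.Icc k₀ ⌊b⌋₊).card : ℝ) ≤ 16 * k₀ := by
    have := natFloor_add_one_le_sixteen_mul_natFloor_add_one |c| hA hβA
    rw [Nat.card_Icc]
    refine le_trans ?_ this
    exact_mod_cast Nat.sub_le _ _
  calc volume {y ∈ 𝕀 | HasSmallNonzeroMultiple β c (A * y)}
      ≤ ∑ k ∈ Finset.Icc k₀ ⌊b⌋₊, volume (Set.Ioo (a / k) (b / k)) :=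
        (measure_mono (setOf_hasSmallNonzeroMultiple_subset_biUnion c hA)).trans
          (measure_biUnion_finset_le _ _)
    _ ≤ (Finset.Icc k₀ ⌊b⌋₊).card • ENNReal.ofReal ((b - a) / k₀) :=
        Finset.sum_le_card_nsmul _ _ _ hlen
    _ = ENNReal.ofReal ((Finset.Icc k₀ ⌊b⌋₊).card * ((b - a) / k₀)) := by
        rw [nsmul_eq_mul, ENNReal.ofReal_mul (by positivity), ENNReal.ofReal_natCast]
    _ ≤ ENNReal.ofReal (32 * β / A) := by
        refine ENNReal.ofReal_le_ofReal ?_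
        calc ((Finset.Icc k₀ ⌊b⌋₊).card : ℝ) * ((b - a) / k₀) ≤ 16 * k₀ * ((b - a) / k₀) := by
              gcongr
          _ = 32 * β / A := by rw [hba]; field_simp; ring

theorem ofReal_mul_volume_Ioc_one_four (x : ℝ) :
    ENNReal.ofReal x * volume 𝕀 = ENNReal.ofReal (3 * x) := by
  rw [Real.volume_Ioc, ← ENNReal.ofReal_mul' (by norm_num)]
  norm_num [mul_comm]

theorem volume_setOf_prod_hasSmallNonzeroMultiple_le {A β : ℝ} {c : ℝ → ℝ} (hc : Measurable c)
    (hβ : 0 < β) (hβA : β ≤ A) :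
    volume {p : ℝ × ℝ | p ∈ 𝕀 ×ˢ 𝕀 ∧ HasSmallNonzeroMultiple β (c p.1) (A * p.2)} ≤
      ENNReal.ofReal (96 * β / A) := by
  refine (Measure.prod_apply_le_mul_of_forall_fiber_le ?_ measurableSet_Ioc
    (fun p hp => hp.1.1) fun x _ => (measure_mono ?_).trans
      (volume_setOf_hasSmallNonzeroMultiple_le (c x) hβ hβA)).trans_eq ?_
  · exact (measurableSet_Ioc.prod measurableSet_Ioc).inter
      (measurableSet_hasSmallNonzeroMultiple (by fun_prop) (by fun_prop) β)
  · exact fun y hy => ⟨hy.1.2, hy.2⟩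
  · rw [ofReal_mul_volume_Ioc_one_four]
    ring_nf

theorem volume_setOf_hasSmallNonzeroMultiple_snd_snd_le {A β : ℝ} {c : ℝ × ℝ → ℝ}
    (hc : Measurable c) (hβ : 0 < β) (hβA : β ≤ A) :
    volume {g : ℝ × ℝ × ℝ | g ∈ 𝕀 ×ˢ 𝕀 ×ˢ 𝕀 ∧
      HasSmallNonzeroMultiple β (c (g.1, g.2.1)) (A * g.2.2)} ≤
      ENNReal.ofReal (288 * β / A) := by
  refine (Measure.prod_apply_le_mul_of_forall_fiber_le ?_ measurableSet_Ioc
    (fun g hg => hg.1.1) fun x _ => (measure_mono ?_).trans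
      (volume_setOf_prod_hasSmallNonzeroMultiple_le (c := fun y => c (x, y))
        (by fun_prop) hβ hβA)).trans_eq ?_
  · exact (measurableSet_Ioc.prod (measurableSet_Ioc.prod measurableSet_Ioc)).inter
      (measurableSet_hasSmallNonzeroMultiple (by fun_prop) (by fun_prop) β)
  · exact fun p hp => ⟨hp.1.2, hp.2⟩
  · rw [ofReal_mul_volume_Ioc_one_four]
    ring_nf

theorem volume_setOf_hasSmallNonzeroMultiple_snd_fst_le {A β : ℝ} {c : ℝ → ℝ}
    (hc : Measurable c) (hβ : 0 < β) (hβA : β ≤ A) :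
    volume {g : ℝ × ℝ × ℝ | g ∈ 𝕀 ×ˢ 𝕀 ×ˢ 𝕀 ∧ HasSmallNonzeroMultiple β (c g.1) (A * g.2.1)} ≤
      ENNReal.ofReal (288 * β / A) := by
  refine (Measure.prod_apply_le_mul_of_forall_fiber_le (m := ENNReal.ofReal (96 * β / A)) ?_
    measurableSet_Ioc (fun g hg => hg.1.1) fun x _ => ?_).trans_eq ?_
  · exact (measurableSet_Ioc.prod (measurableSet_Ioc.prod measurableSet_Ioc)).inter
      (measurableSet_hasSmallNonzeroMultiple (by fun_prop) (by fun_prop) β)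
  · calc volume (Prod.mk x ⁻¹' _)
        ≤ volume ({y ∈ 𝕀 | HasSmallNonzeroMultiple β (c x) (A * y)} ×ˢ 𝕀) :=
          measure_mono fun p hp => ⟨⟨hp.1.2.1, hp.2⟩, hp.1.2.2⟩
      _ = volume {y ∈ 𝕀 | HasSmallNonzeroMultiple β (c x) (A * y)} * volume 𝕀 :=
          Measure.volume_eq_prod ℝ ℝ ▸ Measure.prod_prod _ _
      _ ≤ ENNReal.ofReal (32 * β / A) * volume 𝕀 := by
          gcongr
          exact volume_setOf_hasSmallNonzeroMultiple_le (c x) hβ hβA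
      _ = ENNReal.ofReal (96 * β / A) := by
          rw [ofReal_mul_volume_Ioc_one_four]
          ring_nf
  · rw [ofReal_mul_volume_Ioc_one_four]
    ring_nf

theorem mem_Icc_neg_floor_floor_of_abs_le {q : ℤ} {R : ℝ} (h : |(q : ℝ)| ≤ R) :
    q ∈ Finset.Icc (-⌊R⌋) ⌊R⌋ :=
  Finset.mem_Icc.2 (abs_le.1 (Int.le_floor.2 (by exact_mod_cast h)))

theorem card_Icc_neg_floor_floor_le {R : ℝ} (hR : 0 ≤ R) :
    ((Finset.Icc (-⌊R⌋) ⌊R⌋).card : ℝ) ≤ 2 * R + 1 := by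
  have hcard : ((Finset.Icc (-⌊R⌋) ⌊R⌋).card : ℤ) = 2 * ⌊R⌋ + 1 := by
    rw [Int.card_Icc, Int.toNat_of_nonneg (by linarith [Int.floor_nonneg.2 hR])]
    ring
  have : ((Finset.Icc (-⌊R⌋) ⌊R⌋).card : ℝ) = 2 * ⌊R⌋ + 1 := by exact_mod_cast hcard
  linarith [Int.floor_le R]

def outageSet (A₁ A₂ β R₀ R₁ R₂ : ℝ) : Set (ℝ × ℝ × ℝ) :=
  {g | g ∈ 𝕀 ×ˢ 𝕀 ×ˢ 𝕀 ∧ ∃ q₀ q₁ q₂ : ℤ, ¬(q₀ = 0 ∧ q₁ = 0 ∧ q₂ = 0) ∧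
    |(q₀ : ℝ)| ≤ R₀ ∧ |(q₁ : ℝ)| ≤ R₁ ∧ |(q₂ : ℝ)| ≤ R₂ ∧
    |g.1 * q₀ + A₁ * g.2.1 * q₁ + A₂ * g.2.2 * q₂| < β}

theorem outageSet_eq_empty (A₁ A₂ β : ℝ) {R₀ R₁ R₂ : ℝ} (h₀ : R₀ < 1) (h₁ : R₁ < 1)
    (h₂ : R₂ < 1) : outageSet A₁ A₂ β R₀ R₁ R₂ = ∅ := by
  have eq_zero {q : ℤ} {R : ℝ} (hR : R < 1) (hq : |(q : ℝ)| ≤ R) : q = 0 :=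
    Int.abs_lt_one_iff.1 (by exact_mod_cast hq.trans_lt hR)
  refine Set.eq_empty_of_forall_notMem ?_
  rintro g ⟨-, q₀, q₁, q₂, hq, hq₀, hq₁, hq₂, -⟩
  exact hq ⟨eq_zero h₀ hq₀, eq_zero h₁ hq₁, eq_zero h₂ hq₂⟩

theorem outageSet_subset (A₁ A₂ : ℝ) {β : ℝ} (hβ : β ≤ 1) (R₀ R₁ R₂ : ℝ) :
    outageSet A₁ A₂ β R₀ R₁ R₂ ⊆
      (⋃ q₀ ∈ Finset.Icc (-⌊R₀⌋) ⌊R₀⌋,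
        {g | g ∈ 𝕀 ×ˢ 𝕀 ×ˢ 𝕀 ∧ HasSmallNonzeroMultiple β (g.1 * q₀) (A₁ * g.2.1)}) ∪
      ⋃ q ∈ Finset.Icc (-⌊R₀⌋) ⌊R₀⌋ ×ˢ Finset.Icc (-⌊R₁⌋) ⌊R₁⌋,
        {g | g ∈ 𝕀 ×ˢ 𝕀 ×ˢ 𝕀 ∧
          HasSmallNonzeroMultiple β (g.1 * q.1 + A₁ * g.2.1 * q.2) (A₂ * g.2.2)} := by
  rintro g ⟨hg, q₀, q₁, q₂, hq, hq₀, hq₁, -, hlt⟩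
  rcases eq_or_ne q₂ 0 with rfl | hq₂
  · rcases eq_or_ne q₁ 0 with rfl | hq₁
    · have hq₀' : (1 : ℝ) ≤ |(q₀ : ℝ)| := by
        exact_mod_cast Int.one_le_abs fun h => hq ⟨h, rfl, rfl⟩
      simp only [Int.cast_zero, mul_zero, add_zero, abs_mul,
        abs_of_pos (zero_lt_one.trans hg.1.1)] at hlt
      nlinarith [hg.1.1]
    · refine Or.inl (Set.mem_biUnion (mem_Icc_neg_floor_floor_of_abs_le hq₀) ⟨hg, q₁, hq₁, ?_⟩)
      simpa using hlt
  · exact Or.inr (Set.mem_biUnion (x := (q₀, q₁)) (Finset.mem_product.2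
      ⟨mem_Icc_neg_floor_floor_of_abs_le hq₀, mem_Icc_neg_floor_floor_of_abs_le hq₁⟩)
      ⟨hg, q₂, hq₂, hlt⟩)

theorem volume_outageSet_le {A₁ A₂ β R₀ R₁ : ℝ} (hβ : 0 < β) (hβ₁ : β ≤ 1) (hβA₁ : β ≤ A₁)
    (hβA₂ : β ≤ A₂) (hR₀ : 0 ≤ R₀) (hR₁ : 0 ≤ R₁) (R₂ : ℝ) :
    volume (outageSet A₁ A₂ β R₀ R₁ R₂) ≤ ENNReal.ofReal
      ((2 * R₀ + 1) * (288 * β / A₁) + (2 * R₀ + 1) * (2 * R₁ + 1) * (288 * β / A₂)) := by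
  set F₀ := Finset.Icc (-⌊R₀⌋) ⌊R₀⌋
  set F₁ := Finset.Icc (-⌊R₁⌋) ⌊R₁⌋
  have hA₁ : 0 < A₁ := hβ.trans_le hβA₁
  have hA₂ : 0 < A₂ := hβ.trans_le hβA₂
  calc volume (outageSet A₁ A₂ β R₀ R₁ R₂)
      ≤ ∑ q₀ ∈ F₀, volume {g : ℝ × ℝ × ℝ | g ∈ 𝕀 ×ˢ 𝕀 ×ˢ 𝕀 ∧
          HasSmallNonzeroMultiple β (g.1 * q₀) (A₁ * g.2.1)} +
        ∑ q ∈ F₀ ×ˢ F₁, volume {g : ℝ × ℝ × ℝ | g ∈ 𝕀 ×ˢ 𝕀 ×ˢ 𝕀 ∧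
          HasSmallNonzeroMultiple β (g.1 * q.1 + A₁ * g.2.1 * q.2) (A₂ * g.2.2)} :=
        (measure_mono (outageSet_subset A₁ A₂ hβ₁ R₀ R₁ R₂)).trans <|
          (measure_union_le _ _).trans <| add_le_add (measure_biUnion_finset_le _ _) (measure_biUnion_finset_le _ _)
    _ ≤ F₀.card • ENNReal.ofReal (288 * β / A₁) +
        (F₀ ×ˢ F₁).card • ENNReal.ofReal (288 * β / A₂) :=
        add_le_add
          (Finset.sum_le_card_nsmul _ _ _ fun q₀ _ =>
            volume_setOf_hasSmallNonzeroMultiple_snd_fst_le (c := (· * q₀)) (by fun_prop) hβ hβA₁)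
          (Finset.sum_le_card_nsmul _ _ _ fun q _ =>
            volume_setOf_hasSmallNonzeroMultiple_snd_snd_le
              (c := fun p => p.1 * q.1 + A₁ * p.2 * q.2) (by fun_prop) hβ hβA₂)
    _ = ENNReal.ofReal (F₀.card * (288 * β / A₁) + (F₀ ×ˢ F₁).card * (288 * β / A₂)) := by
        rw [ENNReal.ofReal_add (by positivity) (by positivity), ENNReal.ofReal_mul (by positivity),
          ENNReal.ofReal_mul (by positivity), ENNReal.ofReal_natCast, ENNReal.ofReal_natCast,
          nsmul_eq_mul, nsmul_eq_mul]
    _ ≤ _ := by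
        refine ENNReal.ofReal_le_ofReal ?_
        rw [Finset.card_product, Nat.cast_mul]
        have h₀ := card_Icc_neg_floor_floor_le hR₀
        have h₁ := card_Icc_neg_floor_floor_le hR₁
        gcongr

theorem volume_outageSet_two_four_two_le {A₁ A₂ β : ℝ} (hβ : 0 < β) (hβ₁ : β ≤ 1)
    (hβA₁ : β ≤ A₁) (hβA₂ : β ≤ A₂) (Q : ℝ) :
    volume (outageSet A₁ A₂ β (2 * Q) (4 * Q) (2 * Q)) ≤
      ENNReal.ofReal (2304 * (Q * β / A₁) + 27648 * (Q * Q * β / A₂)) := by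
  rcases lt_or_ge (4 * Q) 1 with hQ | hQ
  · rw [outageSet_eq_empty _ _ _ (by linarith) hQ (by linarith), measure_empty]
    exact zero_le
  have hA₁ : 0 < A₁ := hβ.trans_le hβA₁
  have hA₂ : 0 < A₂ := hβ.trans_le hβA₂
  refine (volume_outageSet_le hβ hβ₁ hβA₁ hβA₂ (by linarith) (by linarith) _).trans
    (ENNReal.ofReal_le_ofReal ?_)
  calc (2 * (2 * Q) + 1) * (288 * β / A₁) + (2 * (2 * Q) + 1) * (2 * (4 * Q) + 1) * (288 * β / A₂)
      ≤ 8 * Q * (288 * β / A₁) + 8 * Q * (12 * Q) * (288 * β / A₂) := by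
        gcongr <;> linarith
    _ = 2304 * (Q * β / A₁) + 27648 * (Q * Q * β / A₂) := by ring

theorem outage_set_measure_regime_one_three_halves_general
    (α δ ε P : ℝ)
    (hα : α ∈ Set.Icc (1 : ℝ) (3 / 2)) (hδ : δ ∈ Set.Ioc (0 : ℝ) 1) (hε : 0 < ε)
    (hP : 1 ≤ P) :
    volume {g : ℝ × ℝ × ℝ |
        g ∈ (Set.Ioc (1 : ℝ) 4) ×ˢ (Set.Ioc (1 : ℝ) 4) ×ˢ (Set.Ioc (1 : ℝ) 4) ∧
        ∃ q₀ q₁ q₂ : ℤ, ¬(q₀ = 0 ∧ q₁ = 0 ∧ q₂ = 0) ∧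
          |(q₀ : ℝ)| ≤ 2 * P ^ ((α / 3 - ε) / 2) ∧
          |(q₁ : ℝ)| ≤ 4 * P ^ ((α / 3 - ε) / 2) ∧
          |(q₂ : ℝ)| ≤ 2 * P ^ ((α / 3 - ε) / 2) ∧
          |g.1 * (q₀ : ℝ) + P ^ ((α - 1) / 2) * g.2.1 * (q₁ : ℝ)
              + P ^ (α - 1) * g.2.2 * (q₂ : ℝ)|
            < δ * P ^ (-(2 - 4 * α / 3) / 2)}
      ≤ ENNReal.ofReal (129024 * δ * P ^ (-ε / 2)) := by
  obtain ⟨hα₁, hα₂⟩ := hα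
  obtain ⟨hδ₀, hδ₁⟩ := hδ
  have hP₀ : 0 < P := zero_lt_one.trans_le hP
  set A₁ := P ^ ((α - 1) / 2)
  set A₂ := P ^ (α - 1)
  set Q := P ^ ((α / 3 - ε) / 2)
  set β := δ * P ^ (-(2 - 4 * α / 3) / 2)
  have hβ₁ : β ≤ 1 :=
    mul_le_one₀ hδ₁ (by positivity) (rpow_le_one_of_one_le_of_nonpos hP (by linarith))
  have hA₁ : 1 ≤ A₁ := one_le_rpow hP (by linarith)
  have hA₂ : 1 ≤ A₂ := one_le_rpow hP (by linarith)
  have hQβ : Q * β / A₁ ≤ δ * P ^ (-ε / 2) := by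
    rw [show Q * β / A₁ =
        δ * P ^ ((α / 3 - ε) / 2 + -(2 - 4 * α / 3) / 2 - (α - 1) / 2) by
      rw [rpow_sub hP₀, rpow_add hP₀]; ring]
    gcongr
    linarith
  have hQQβ : Q * Q * β / A₂ ≤ δ * P ^ (-ε / 2) := by
    rw [show Q * Q * β / A₂ =
        δ * P ^ ((α / 3 - ε) / 2 + (α / 3 - ε) / 2 + -(2 - 4 * α / 3) / 2 - (α - 1)) by
      rw [rpow_sub hP₀, rpow_add hP₀, rpow_add hP₀]; ring]
    gcongr
    linarith
  refine (volume_outageSet_two_four_two_le (by positivity) hβ₁ (hβ₁.trans hA₁) (hβ₁.trans hA₂)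
    Q).trans (ENNReal.ofReal_le_ofReal ?_)
  nlinarith [rpow_pos_of_pos hP₀ (-ε / 2)]

/-- The Lebesgue measure of the outage set `B̄ ⊆ (1,4]³` of triples admitting a small
nontrivial integer combination is at most `129024·δ·P^{-ε/2}` (regime `1 ≤ α ≤ 3/2`). -/
theorem outage_set_measure_regime_one_three_halves
    (α δ ε P : ℝ)
    (hα : α ∈ Set.Icc (1 : ℝ) (3 / 2)) (hδ : δ ∈ Set.Ioc (0 : ℝ) 1) (hε : 0 < ε)
    (hP : 1 ≤ P)
    (hA₁ : ∃ n : ℕ, 0 < n ∧ P ^ ((α - 1) / 2) = (n : ℝ))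
    (hA₂ : ∃ n : ℕ, 0 < n ∧ P ^ (α - 1) = (n : ℝ)) :
    volume {g : ℝ × ℝ × ℝ |
        g ∈ (Set.Ioc (1 : ℝ) 4) ×ˢ (Set.Ioc (1 : ℝ) 4) ×ˢ (Set.Ioc (1 : ℝ) 4) ∧
        ∃ q₀ q₁ q₂ : ℤ, ¬(q₀ = 0 ∧ q₁ = 0 ∧ q₂ = 0) ∧
          |(q₀ : ℝ)| ≤ 2 * P ^ ((α / 3 - ε) / 2) ∧
          |(q₁ : ℝ)| ≤ 4 * P ^ ((α / 3 - ε) / 2) ∧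
          |(q₂ : ℝ)| ≤ 2 * P ^ ((α / 3 - ε) / 2) ∧
          |g.1 * (q₀ : ℝ) + P ^ ((α - 1) / 2) * g.2.1 * (q₁ : ℝ)
              + P ^ (α - 1) * g.2.2 * (q₂ : ℝ)|
            < δ * P ^ (-(2 - 4 * α / 3) / 2)}
      ≤ ENNReal.ofReal (129024 * δ * P ^ (-ε / 2)) :=
  outage_set_measure_regime_one_three_halves_general α δ ε P hα hδ hε hP
end
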